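/- Let P, Q ∈ Ψ(R) with P₊ = 1, and suppose that in Ψ(R)[ε] one has ( (P + εQ)(P + εQ)* )₋ = 0. Then P* + εQ* = P⁻¹ · ( 1 − ε Q P⁻¹ + ε ( Q P⁻¹ + P Q* )₊ ). -/

import Mathlib

open scoped BigOperators

/-- Generalized binomial coefficient `C(k,l) = k(k-1)⋯(k-l+1)/l!` for `k : ℤ`. -/
def gbinom (k : ℤ) (l : ℕ) : ℚ :=
  (∏ i ∈ Finset.range l, ((k : ℚ) - i)) / (Nat.factorial l)

/-- Pseudo-differential operators (and symbols): coefficient functions `ℤ → R`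
with support bounded above.  The parameter `d` (the derivation) determines the product. -/
structure PDO (R : Type) [CommRing R] [Algebra ℚ R] (d : R →+ R) where
  coeff : ℤ → R
  bdd : ∃ N : ℤ, ∀ n : ℤ, N < n → coeff n = 0

namespace PDO

variable {R : Type} [CommRing R] [Algebra ℚ R] {d : R →+ R}

theorem ext' {A B : PDO R d} (h : A.coeff = B.coeff) : A = B := by
  cases A; cases B; cases h; rfl

set_option linter.unusedSectionVars false in
theorem iterD_zero (d : R →+ R) (j : ℕ) : d^[j] (0 : R) = 0 := by
  induction j with
  | zero => rfl
  | succ j ih => rw [Function.iterate_succ_apply', ih, map_zero]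

instance : Zero (PDO R d) := ⟨⟨fun _ => 0, ⟨0, fun _ _ => rfl⟩⟩⟩

instance : One (PDO R d) :=
  ⟨⟨fun n => if n = 0 then 1 else 0, ⟨0, fun n hn => if_neg (by omega)⟩⟩⟩

instance : Add (PDO R d) :=
  ⟨fun A B => ⟨fun n => A.coeff n + B.coeff n, by
    obtain ⟨N, hN⟩ := A.bdd
    obtain ⟨M, hM⟩ := B.bdd
    exact ⟨max N M, fun n hn => by
      show A.coeff n + B.coeff n = 0
      rw [hN n (lt_of_le_of_lt (le_max_left N M) hn),
        hM n (lt_of_le_of_lt (le_max_right N M) hn), add_zero]⟩⟩⟩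

instance : Neg (PDO R d) :=
  ⟨fun A => ⟨fun n => -A.coeff n, by
    obtain ⟨N, hN⟩ := A.bdd
    exact ⟨N, fun n hn => by show -A.coeff n = 0; rw [hN n hn, neg_zero]⟩⟩⟩

instance : SMul ℚ (PDO R d) :=
  ⟨fun c A => ⟨fun n => c • A.coeff n, by
    obtain ⟨N, hN⟩ := A.bdd
    exact ⟨N, fun n hn => by show c • A.coeff n = 0; rw [hN n hn, smul_zero]⟩⟩⟩

instance : AddCommGroup (PDO R d) where
  add := (· + ·)
  zero := 0
  neg := Neg.neg
  add_assoc A B C := ext' (funext fun n => add_assoc (A.coeff n) (B.coeff n) (C.coeff n))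
  zero_add A := ext' (funext fun n => zero_add (A.coeff n))
  add_zero A := ext' (funext fun n => add_zero (A.coeff n))
  add_comm A B := ext' (funext fun n => add_comm (A.coeff n) (B.coeff n))
  neg_add_cancel A := ext' (funext fun n => neg_add_cancel (A.coeff n))
  nsmul := nsmulRec
  zsmul := zsmulRec

/-- The product of pseudo-differential operators, determined by the commutation rule
`∂^k · f = Σ_{l ≥ 0} C(k,l) (∂^l f) ∂^(k-l)`. -/
noncomputable instance : Mul (PDO R d) :=
  ⟨fun A B =>
    ⟨fun n => ∑ᶠ (k : ℤ) (m : ℤ),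
        if _ : 0 ≤ k + m - n then
          A.coeff k * (gbinom k (k + m - n).toNat • (d^[(k + m - n).toNat] (B.coeff m)))
        else 0, by
      obtain ⟨N, hN⟩ := A.bdd
      obtain ⟨M, hM⟩ := B.bdd
      refine ⟨N + M, fun n hn => ?_⟩
      have hz : ∀ k m : ℤ,
          (if _ : 0 ≤ k + m - n then
            A.coeff k * (gbinom k (k + m - n).toNat • (d^[(k + m - n).toNat] (B.coeff m)))
          else 0) = 0 := by
        intro k m
        by_cases hl : 0 ≤ k + m - n
        · rw [dif_pos hl]
          by_cases hk : N < k
          · rw [hN k hk, zero_mul]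
          · rw [hM m (by omega), iterD_zero, smul_zero, mul_zero]
        · rw [dif_neg hl]
      simp only [hz, finsum_zero]⟩⟩

noncomputable def npow (A : PDO R d) : ℕ → PDO R d
  | 0 => 1
  | n + 1 => npow A n * A

noncomputable instance : Pow (PDO R d) ℕ := ⟨fun A n => A.npow n⟩

/-- The monomial `r ∂^k`. -/
def mono (r : R) (k : ℤ) : PDO R d :=
  ⟨fun n => if n = k then r else 0, ⟨k, fun n hn => if_neg (by omega)⟩⟩

/-- The constant (order-zero) operator `r`. -/
def const (r : R) : PDO R d := mono r 0

/-- The operator `∂`. -/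
def del : PDO R d := mono (1 : R) 1

/-- The operator `h∂`. -/
def hdel (h : Rˣ) : PDO R d := mono (h : R) 1

/-- The Lax operator `L = h²∂² + 2u`. -/
def Lop (h : Rˣ) (u : R) : PDO R d :=
  ⟨fun n => if n = 2 then (h : R) ^ 2 else if n = 0 then 2 * u else 0,
   ⟨2, fun n hn => by
      show (if n = 2 then (h : R) ^ 2 else if n = 0 then 2 * u else 0) = 0
      rw [if_neg (by omega), if_neg (by omega)]⟩⟩

/-- The differential part `A₊`. -/
def pos (A : PDO R d) : PDO R d :=
  ⟨fun n => if 0 ≤ n then A.coeff n else 0, by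
    obtain ⟨N, hN⟩ := A.bdd
    refine ⟨N, fun n hn => ?_⟩
    show (if 0 ≤ n then A.coeff n else 0) = 0
    by_cases h0 : (0 : ℤ) ≤ n
    · rw [if_pos h0]; exact hN n hn
    · rw [if_neg h0]⟩

/-- The integral part `A₋ = A − A₊`. -/
def negp (A : PDO R d) : PDO R d :=
  ⟨fun n => if n < 0 then A.coeff n else 0, ⟨0, fun n hn => if_neg (by omega)⟩⟩

/-- The residue `Res_∂ A = a₋₁`. -/
def res (A : PDO R d) : R := A.coeff (-1)

/-- The formal adjoint, determined by `(f ∂^k)* = (−∂)^k · f`. -/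
noncomputable def adj (A : PDO R d) : PDO R d :=
  ⟨fun n => ∑ᶠ k : ℤ,
      if _ : 0 ≤ k - n then
        (((-1 : ℚ) ^ k) * gbinom k (k - n).toNat) • (d^[(k - n).toNat] (A.coeff k))
      else 0, by
    obtain ⟨N, hN⟩ := A.bdd
    refine ⟨N, fun n hn => ?_⟩
    have hz : ∀ k : ℤ, (if _ : 0 ≤ k - n then
        (((-1 : ℚ) ^ k) * gbinom k (k - n).toNat) • (d^[(k - n).toNat] (A.coeff k))
      else 0) = 0 := by
      intro k
      by_cases hl : 0 ≤ k - n
      · rw [dif_pos hl, hN k (by omega), iterD_zero, smul_zero]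
      · rw [dif_neg hl]
    simp only [hz, finsum_zero]⟩

/-- The operator `P(h∂) = Σ pₙ hⁿ ∂ⁿ` associated to the symbol `P(λ) = Σ pₙ λⁿ`. -/
noncomputable def ofSymbol (h : Rˣ) (A : PDO R d) : PDO R d :=
  ⟨fun n => A.coeff n * ((h ^ n : Rˣ) : R), by
    obtain ⟨N, hN⟩ := A.bdd
    exact ⟨N, fun n hn => by show A.coeff n * ((h ^ n : Rˣ) : R) = 0; rw [hN n hn, zero_mul]⟩⟩

/-- Apply `d^[i]` to each coefficient. -/
def mapD (i : ℕ) (A : PDO R d) : PDO R d :=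
  ⟨fun n => d^[i] (A.coeff n), by
    obtain ⟨N, hN⟩ := A.bdd
    exact ⟨N, fun n hn => by show d^[i] (A.coeff n) = 0; rw [hN n hn, iterD_zero]⟩⟩

/-- The coefficientwise extension of an additive map `D : R →+ R`. -/
def mapHom (D : R →+ R) (A : PDO R d) : PDO R d :=
  ⟨fun n => D (A.coeff n), by
    obtain ⟨N, hN⟩ := A.bdd
    exact ⟨N, fun n hn => by show D (A.coeff n) = 0; rw [hN n hn, map_zero]⟩⟩

/-- The commutator `[A, B] = AB − BA`. -/
noncomputable def comm (A B : PDO R d) : PDO R d := A * B - B * A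

end PDO

/-- The Leibniz rule: `d` is a derivation. -/
def Leibniz {R : Type} [CommRing R] [Algebra ℚ R] (d : R →+ R) : Prop :=
  ∀ a b : R, d (a * b) = a * d b + b * d a

/-- `aₙ = 1/(2n+1)!!`. -/
def kdvA (n : ℕ) : ℚ := 1 / (Nat.doubleFactorial (2 * n + 1))

/-- `bₙ = (2n−1)!!` (with `b₀ = (−1)!! = 1`). -/
def kdvB (n : ℕ) : ℚ := (Nat.doubleFactorial (2 * n - 1) : ℕ)

/-- Pseudo-differential operators with coefficients in the dual numbers
`R[ε]/(ε²)`: `⟨A, B⟩` represents `A + εB`. -/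
structure EPDO (R : Type) [CommRing R] [Algebra ℚ R] (d : R →+ R) where
  re : PDO R d
  im : PDO R d

namespace EPDO

variable {R : Type} [CommRing R] [Algebra ℚ R] {d : R →+ R}

instance : Add (EPDO R d) := ⟨fun A B => ⟨A.re + B.re, A.im + B.im⟩⟩
instance : Neg (EPDO R d) := ⟨fun A => ⟨-A.re, -A.im⟩⟩
instance : Sub (EPDO R d) := ⟨fun A B => ⟨A.re - B.re, A.im - B.im⟩⟩
instance : Zero (EPDO R d) := ⟨⟨0, 0⟩⟩
instance : One (EPDO R d) := ⟨⟨1, 0⟩⟩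

/-- Multiplication in the dual numbers: `(A + εB)(C + εD) = AC + ε(AD + BC)`. -/
noncomputable instance : Mul (EPDO R d) :=
  ⟨fun A B => ⟨A.re * B.re, A.re * B.im + A.im * B.re⟩⟩

instance : SMul ℚ (EPDO R d) := ⟨fun c A => ⟨c • A.re, c • A.im⟩⟩

noncomputable def epow (A : EPDO R d) : ℕ → EPDO R d
  | 0 => 1
  | n + 1 => epow A n * A

noncomputable instance : Pow (EPDO R d) ℕ := ⟨fun A n => A.epow n⟩

/-- The inclusion `Ψ(R) → Ψ(R)[ε]`. -/
def lift (A : PDO R d) : EPDO R d := ⟨A, 0⟩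

/-- The square-zero formal parameter `ε`. -/
def eps : EPDO R d := ⟨0, 1⟩

/-- The adjoint, extended `ε`-linearly. -/
noncomputable def eadj (A : EPDO R d) : EPDO R d := ⟨PDO.adj A.re, PDO.adj A.im⟩

/-- The differential part, extended `ε`-linearly. -/
def epos (A : EPDO R d) : EPDO R d := ⟨PDO.pos A.re, PDO.pos A.im⟩

/-- The integral part, extended `ε`-linearly. -/
def enegp (A : EPDO R d) : EPDO R d := ⟨PDO.negp A.re, PDO.negp A.im⟩

/-- The commutator in `Ψ(R)[ε]`. -/
noncomputable def ecomm (A B : EPDO R d) : EPDO R d := A * B - B * A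

/-- The residue, with values in the dual numbers `R[ε]` (as a pair). -/
def eres (A : EPDO R d) : R × R := (PDO.res A.re, PDO.res A.im)

end EPDO


/-!
Write `∂ᵏ ∘ y` for the left action of `∂ᵏ` on an operator `y`, so that `(AB)ₙ = Σₖ aₖ (∂ᵏ ∘ B)ₙ`.
Associativity of the product reduces to `∂ᵏ ∘ (BC) = (∂ᵏ ∘ B) C`, which follows from the Leibniz
rule `∂ᵏ ∘ (f y) = Σᵤ C(k,u) (∂ᵘ f) (∂^(k-u) ∘ y)` (the trisection identity
`C(k,u+v) C(u+v,u) = C(k,u) C(k-u,v)`) and from `∂ⁱ ∘ ∂ʲ = ∂^(i+j)` (Chu–Vandermonde).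

Since `P₊ = 1`, also `(P*)₊ = 1` and `(PP*)₊ = 1`, so the `ε⁰`-part of the hypothesis gives
`PP* = 1`, whence `P* = P⁻¹`. The `ε¹`-part says that `PQ* + QP⁻¹` is a differential operator,
i.e. `PQ* = −QP⁻¹ + (QP⁻¹ + PQ*)₊`; multiplying by `P⁻¹` on the left gives the `ε`-coefficient.
-/

open Finset

theorem finsum_comm_of_mem {α β M : Type*} [AddCommMonoid M] {f : α → β → M}
    (s : Finset α) (t : Finset β) (h : ∀ a b, f a b ≠ 0 → a ∈ s ∧ b ∈ t) :
    ∑ᶠ a, ∑ᶠ b, f a b = ∑ᶠ b, ∑ᶠ a, f a b := by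
  have row (a : α) : ∑ᶠ b, f a b = ∑ b ∈ t, f a b :=
    finsum_eq_sum_of_support_subset _ fun b hb => (h a b hb).2
  have col (b : β) : ∑ᶠ a, f a b = ∑ a ∈ s, f a b :=
    finsum_eq_sum_of_support_subset _ fun a ha => (h a b ha).1
  simp only [row, col]
  rw [finsum_eq_sum_of_support_subset _ (s := s), finsum_eq_sum_of_support_subset _ (s := t),
    Finset.sum_comm]
  · intro b hb
    by_contra hbt
    exact hb (sum_eq_zero fun a _ => by_contra fun hab => hbt (h a b hab).2)
  · intro a ha
    by_contra has
    exact ha (sum_eq_zero fun b _ => by_contra fun hab => has (h a b hab).1)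

theorem Finset.sum_range_sum_range_succ_comm {M : Type*} [AddCommMonoid M] (L : ℕ)
    (F : ℕ → ℕ → M) :
    ∑ t ∈ range L, ∑ l ∈ range (t + 1), F l t
      = ∑ l ∈ range L, ∑ m ∈ range (L - l), F l (l + m) := by
  rw [Finset.sum_comm' (t' := range L) (s' := fun l => Ico l L)]
  · exact sum_congr rfl fun l _ => sum_Ico_eq_sum_range _ _ _
  · intro t l
    simp only [mem_range, mem_Ico]
    omega

theorem gbinom_eq_choose (k : ℤ) (l : ℕ) : gbinom k l = Ring.choose (k : ℚ) l := by
  rw [Ring.choose_eq_smul, ← Polynomial.aeval_eq_smeval, Polynomial.aeval_def,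
    ← Polynomial.eval_map, descPochhammer_map, descPochhammer_eval_eq_prod_range, gbinom,
    smul_eq_mul, div_eq_inv_mul]

theorem gbinom_zero_right (k : ℤ) : gbinom k 0 = 1 := by
  simp [gbinom]

theorem gbinom_zero_left {l : ℕ} (hl : l ≠ 0) : gbinom 0 l = 0 := by
  rw [gbinom_eq_choose, Int.cast_zero, Ring.choose_zero_pos ℚ (Nat.pos_of_ne_zero hl)]

theorem gbinom_add (i j : ℤ) (t : ℕ) :
    gbinom (i + j) t = ∑ l ∈ range (t + 1), gbinom i l * gbinom j (t - l) := by
  simp only [gbinom_eq_choose, Int.cast_add]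
  rw [Ring.add_choose_eq t (Commute.all _ _), Nat.sum_antidiagonal_eq_sum_range_succ
    (fun a b => Ring.choose (i : ℚ) a * Ring.choose (j : ℚ) b)]

theorem gbinom_mul_choose (k : ℤ) (u v : ℕ) :
    gbinom k (u + v) * (u + v).choose u = gbinom k u * gbinom (k - u) v := by
  have h := Ring.choose_smul_choose (k : ℚ) (Nat.le_add_right u v)
  rw [nsmul_eq_mul, Nat.add_sub_cancel_left] at h
  simp only [gbinom_eq_choose, Int.cast_sub, Int.cast_natCast]
  rw [← h, mul_comm]

namespace AddMonoidHom

theorem iterate_ne_zero {M : Type*} [AddMonoid M] {f : M →+ M} {l : ℕ} {x : M}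
    (h : f^[l] x ≠ 0) : x ≠ 0 := by
  rintro rfl
  exact h (iterate_map_zero f l)

theorem iterate_map_sum {M ι : Type*} [AddCommMonoid M] (f : M →+ M) (l : ℕ)
    (s : Finset ι) (g : ι → M) : f^[l] (∑ i ∈ s, g i) = ∑ i ∈ s, f^[l] (g i) := by
  induction l with
  | zero => rfl
  | succ l ih => simp only [Function.iterate_succ_apply', ih, map_sum]

theorem iterate_map_rat_smul {M : Type*} [AddCommGroup M] [Module ℚ M] (f : M →+ M) (l : ℕ)
    (c : ℚ) (x : M) : f^[l] (c • x) = c • f^[l] x := by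
  induction l with
  | zero => rfl
  | succ l ih => simp only [Function.iterate_succ_apply', ih, map_rat_smul]

end AddMonoidHom

namespace Leibniz

variable {R : Type} [CommRing R] [Algebra ℚ R] {d : R →+ R}

theorem iterate_mul (hd : Leibniz d) (u : ℕ) (x y : R) :
    d^[u] (x * y) = ∑ v ∈ range (u + 1), u.choose v • (d^[v] x * d^[u - v] y) := by
  induction u with
  | zero => simp
  | succ u ih =>
    rw [Function.iterate_succ_apply', ih, map_sum,
      sum_choose_succ_nsmul (fun i j => d^[i] x * d^[j] y), ← sum_add_distrib]
    refine sum_congr rfl fun v hv => ?_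
    rw [map_nsmul, hd, Nat.sub_add_comm (Nat.le_of_lt_succ (mem_range.1 hv)),
      Function.iterate_succ_apply', Function.iterate_succ_apply', ← smul_add,
      mul_comm (d^[u - v] y)]

theorem iterate_one (hd : Leibniz d) {l : ℕ} (hl : l ≠ 0) : d^[l] (1 : R) = 0 := by
  obtain ⟨l, rfl⟩ := Nat.exists_eq_succ_of_ne_zero hl
  have h1 : d 1 = 0 := by simpa using hd 1 1
  rw [Function.iterate_succ_apply, h1, iterate_map_zero]

end Leibniz

namespace PDO

def VanishesAbove {M : Type*} [Zero M] (y : ℤ → M) (N : ℤ) : Prop := ∀ m, N < m → y m = 0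

theorem VanishesAbove.le_of_ne_zero {M : Type*} [Zero M] {y : ℤ → M} {N m : ℤ}
    (hy : VanishesAbove y N) (h : y m ≠ 0) : m ≤ N :=
  not_lt.1 (mt (hy m) h)

variable {R : Type} [CommRing R] [Algebra ℚ R] {d : R →+ R}

theorem exists_vanishesAbove (A : PDO R d) : ∃ N, VanishesAbove A.coeff N := A.bdd

theorem coeff_one (n : ℤ) : (1 : PDO R d).coeff n = if n = 0 then 1 else 0 := rfl

variable (d) in
/-- The coefficient of `∂ⁿ` in `∂ᵏ ∘ Σₘ yₘ ∂ᵐ`. -/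
noncomputable def delPowMul (k : ℤ) (y : ℤ → R) (n : ℤ) : R :=
  ∑ᶠ l : ℕ, gbinom k l • d^[l] (y (n - k + l))

section delPowMul

variable {y : ℤ → R} {N : ℤ}

theorem support_delPowMul_term_subset (hy : VanishesAbove y N) {k n : ℤ} {L : ℕ}
    (hL : N - n + k < L) :
    Function.support (fun l : ℕ => gbinom k l • d^[l] (y (n - k + l))) ⊆ range L := fun l hl => by
  have := hy.le_of_ne_zero (AddMonoidHom.iterate_ne_zero (right_ne_zero_of_smul hl))
  simp only [coe_range, Set.mem_Iio]
  omega

theorem delPowMul_eq_sum_range (hy : VanishesAbove y N) {k n : ℤ} {L : ℕ} (hL : N - n + k < L) :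
    delPowMul d k y n = ∑ l ∈ range L, gbinom k l • d^[l] (y (n - k + l)) :=
  finsum_eq_sum_of_support_subset _ (support_delPowMul_term_subset hy hL)

theorem hasFiniteSupport_delPowMul_term (hy : VanishesAbove y N) (k n : ℤ) :
    Function.HasFiniteSupport fun l : ℕ => gbinom k l • d^[l] (y (n - k + l)) :=
  (range _).finite_toSet.subset
    (support_delPowMul_term_subset hy (L := (N - n + k).toNat + 1) (by omega))

theorem VanishesAbove.delPowMul (hy : VanishesAbove y N) (k : ℤ) :
    VanishesAbove (delPowMul d k y) (N + k) := fun n hn => by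
  rw [delPowMul_eq_sum_range hy (L := 0) (by omega), sum_range_zero]

theorem delPowMul_zero_left (y : ℤ → R) (n : ℤ) : delPowMul d 0 y n = y n := by
  rw [delPowMul, finsum_eq_single _ 0 fun l hl => by rw [gbinom_zero_left hl, zero_smul]]
  simp [gbinom_zero_right]

theorem delPowMul_one (hd : Leibniz d) (k n : ℤ) :
    delPowMul d k (1 : PDO R d).coeff n = if k = n then 1 else 0 := by
  split_ifs with hkn
  · subst hkn
    rw [delPowMul, finsum_eq_single _ 0 fun l hl => by
      rw [coeff_one, if_neg (by omega), iterate_map_zero, smul_zero]]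
    simp [gbinom_zero_right, coeff_one]
  · refine finsum_eq_zero_of_forall_eq_zero fun l => ?_
    rw [coeff_one]
    split_ifs with hl
    · rw [hd.iterate_one (by omega), smul_zero]
    · rw [iterate_map_zero, smul_zero]

theorem delPowMul_delPowMul (hy : VanishesAbove y N) (i j n : ℤ) :
    delPowMul d i (delPowMul d j y) n = delPowMul d (i + j) y n := by
  set L := (N - n + i + j).toNat + 1
  have inner (l : ℕ) (hl : l ∈ range L) : gbinom i l • d^[l] (delPowMul d j y (n - i + l)) =
      ∑ m ∈ range (L - l), (gbinom i l * gbinom j m) • d^[l + m] (y (n - (i + j) + ↑(l + m))) := by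
    rw [delPowMul_eq_sum_range hy (L := L - l) (by have := mem_range.1 hl; omega),
      AddMonoidHom.iterate_map_sum, smul_sum]
    refine sum_congr rfl fun m _ => ?_
    rw [AddMonoidHom.iterate_map_rat_smul, smul_smul, ← Function.iterate_add_apply]
    congr 3
    push_cast
    ring
  rw [delPowMul_eq_sum_range (hy.delPowMul j) (L := L) (by omega), sum_congr rfl inner,
    delPowMul_eq_sum_range hy (L := L) (by omega)]
  simp only [gbinom_add, sum_smul]
  rw [sum_range_sum_range_succ_comm L
    (fun l t => (gbinom i l * gbinom j (t - l)) • d^[t] (y (n - (i + j) + t)))]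
  simp only [Nat.add_sub_cancel_left]

theorem delPowMul_const_mul (hd : Leibniz d) (hy : VanishesAbove y N) (f : R) (k n : ℤ) :
    delPowMul d k (fun m => f * y m) n
      = ∑ᶠ u : ℕ, gbinom k u • (d^[u] f * delPowMul d (k - u) y n) := by
  set L := (N - n + k).toNat + 1
  have hfy : VanishesAbove (fun m => f * y m) N := fun m hm => by simp only [hy m hm, mul_zero]
  rw [delPowMul_eq_sum_range hfy (L := L) (by omega),
    finsum_eq_sum_of_support_subset (s := range L) _ fun u hu => ?_]
  · simp only [hd.iterate_mul, smul_sum]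
    rw [sum_range_sum_range_succ_comm L
      (fun u l => gbinom k l • l.choose u • (d^[u] f * d^[l - u] (y (n - k + l))))]
    refine sum_congr rfl fun u hu => ?_
    rw [delPowMul_eq_sum_range hy (L := L - u) (by have := mem_range.1 hu; omega), mul_sum,
      smul_sum]
    refine sum_congr rfl fun v _ => ?_
    rw [Nat.add_sub_cancel_left, ← Nat.cast_smul_eq_nsmul ℚ, smul_smul, gbinom_mul_choose,
      mul_smul_comm, smul_smul]
    congr 4
    push_cast
    ring
  · by_contra huL
    simp only [coe_range, Set.mem_Iio, not_lt] at huL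
    exact hu (by dsimp only; rw [hy.delPowMul (k - u) n (by omega), mul_zero, smul_zero])

end delPowMul

theorem coeff_mul (A B : PDO R d) (n : ℤ) :
    (A * B).coeff n = ∑ᶠ k, A.coeff k * delPowMul d k B.coeff n := by
  refine finsum_congr fun k => ?_
  obtain ⟨b, hb⟩ := B.exists_vanishesAbove
  set L := (b - n + k).toNat + 1
  rw [delPowMul_eq_sum_range hb (L := L) (by omega), mul_sum,
    finsum_eq_sum_of_support_subset (s := (range L).map
      (Nat.castEmbedding.trans (addLeftEmbedding (n - k)))) _ fun m hm => ?_, sum_map]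
  · refine sum_congr rfl fun l _ => ?_
    have hl : k + (n - k + l) - n = l := by ring
    simp [hl]
  · rw [Function.mem_support, ne_eq, dite_eq_right_iff, not_forall] at hm
    obtain ⟨hkm, hne⟩ := hm
    have := hb.le_of_ne_zero
      (AddMonoidHom.iterate_ne_zero (right_ne_zero_of_smul (right_ne_zero_of_mul hne)))
    simp only [coe_map, coe_range, Set.mem_image, Set.mem_Iio]
    exact ⟨(k + m - n).toNat, by omega, by
      simp only [Function.Embedding.trans_apply, Nat.castEmbedding_apply, Int.ofNat_toNat,
        addLeftEmbedding_apply]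
      omega⟩

theorem delPowMul_coeff_mul (hd : Leibniz d) (B C : PDO R d) (k n : ℤ) :
    delPowMul d k (B * C).coeff n
      = ∑ᶠ p, ∑ᶠ u : ℕ, gbinom k u • (d^[u] (B.coeff p) * delPowMul d (k - u + p) C.coeff n) := by
  obtain ⟨b, hb⟩ := B.exists_vanishesAbove
  obtain ⟨c, hc⟩ := C.exists_vanishesAbove
  have box (u : ℕ) (p : ℤ) (hp : B.coeff p ≠ 0) (hup : n - k + u - p ≤ c) :
      u ∈ range ((b + c - n + k).toNat + 1) ∧ p ∈ Icc (n - k - c) b := by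
    have := hb.le_of_ne_zero hp
    rw [mem_range, mem_Icc]
    omega
  calc delPowMul d k (B * C).coeff n
      = ∑ᶠ u : ℕ, ∑ᶠ p, gbinom k u • d^[u] (B.coeff p * delPowMul d p C.coeff (n - k + u)) := by
        refine finsum_congr fun u => ?_
        have hsupp (p : ℤ) (hp : B.coeff p * delPowMul d p C.coeff (n - k + u) ≠ 0) :
            p ∈ Icc (n - k - c) b := by
          have := (hc.delPowMul p).le_of_ne_zero (right_ne_zero_of_mul hp)
          exact (box u p (left_ne_zero_of_mul hp) (by omega)).2
        rw [coeff_mul, finsum_eq_sum_of_support_subset _ hsupp,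
          finsum_eq_sum_of_support_subset (s := Icc (n - k - c) b) _
            fun p hp => hsupp p (AddMonoidHom.iterate_ne_zero (right_ne_zero_of_smul hp)),
          AddMonoidHom.iterate_map_sum, smul_sum]
    _ = ∑ᶠ p, ∑ᶠ u : ℕ, gbinom k u • d^[u] (B.coeff p * delPowMul d p C.coeff (n - k + u)) := by
        refine finsum_comm_of_mem (range ((b + c - n + k).toNat + 1)) (Icc (n - k - c) b)
          fun u p hup => ?_
        have h := AddMonoidHom.iterate_ne_zero (right_ne_zero_of_smul hup)
        have := (hc.delPowMul p).le_of_ne_zero (right_ne_zero_of_mul h)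
        exact box u p (left_ne_zero_of_mul h) (by omega)
    _ = _ := finsum_congr fun p =>
        (delPowMul_const_mul hd (hc.delPowMul p) (B.coeff p) k n).trans
          (by simp only [delPowMul_delPowMul hc])

theorem finsum_delPowMul_mul_delPowMul (B C : PDO R d) (k n : ℤ) :
    ∑ᶠ q, delPowMul d k B.coeff q * delPowMul d q C.coeff n
      = ∑ᶠ p, ∑ᶠ u : ℕ, gbinom k u • (d^[u] (B.coeff p) * delPowMul d (k - u + p) C.coeff n) := by
  obtain ⟨b, hb⟩ := B.exists_vanishesAbove
  obtain ⟨c, hc⟩ := C.exists_vanishesAbove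
  set U := (b + c - n + k).toNat + 1
  calc ∑ᶠ q, delPowMul d k B.coeff q * delPowMul d q C.coeff n
      = ∑ᶠ q, ∑ᶠ u : ℕ, gbinom k u • (d^[u] (B.coeff (q - k + u)) * delPowMul d q C.coeff n) := by
        refine finsum_congr fun q => ?_
        rw [delPowMul.eq_1 d k B.coeff q, finsum_mul' _ _ (hasFiniteSupport_delPowMul_term hb k q)]
        simp only [smul_mul_assoc]
    _ = ∑ᶠ u : ℕ, ∑ᶠ q, gbinom k u • (d^[u] (B.coeff (q - k + u)) * delPowMul d q C.coeff n) := by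
        refine (finsum_comm_of_mem (range U) (Icc (n - c) (b + k)) fun u q huq => ?_).symm
        have h := right_ne_zero_of_smul huq
        have := hb.le_of_ne_zero (AddMonoidHom.iterate_ne_zero (left_ne_zero_of_mul h))
        have := (hc.delPowMul q).le_of_ne_zero (right_ne_zero_of_mul h)
        rw [mem_range, mem_Icc]
        omega
    _ = ∑ᶠ u : ℕ, ∑ᶠ p, gbinom k u • (d^[u] (B.coeff p) * delPowMul d (k - u + p) C.coeff n) := by
        refine finsum_congr fun u =>
          (finsum_comp_equiv (Equiv.addLeft (k - u))).symm.trans (finsum_congr fun p => ?_)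
        rw [Equiv.coe_addLeft, show k - u + p - k + u = p by ring]
    _ = _ := by
        refine finsum_comm_of_mem (range U) (Icc (n - k - c) b) fun u p hup => ?_
        have h := right_ne_zero_of_smul hup
        have := hb.le_of_ne_zero (AddMonoidHom.iterate_ne_zero (left_ne_zero_of_mul h))
        have := (hc.delPowMul _).le_of_ne_zero (right_ne_zero_of_mul h)
        rw [mem_range, mem_Icc]
        omega

theorem delPowMul_mul (hd : Leibniz d) (B C : PDO R d) (k n : ℤ) :
    delPowMul d k (B * C).coeff n = ∑ᶠ q, delPowMul d k B.coeff q * delPowMul d q C.coeff n :=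
  (delPowMul_coeff_mul hd B C k n).trans (finsum_delPowMul_mul_delPowMul B C k n).symm

protected theorem mul_assoc (hd : Leibniz d) (A B C : PDO R d) : A * B * C = A * (B * C) := by
  refine ext' (funext fun n => ?_)
  obtain ⟨a, ha⟩ := A.exists_vanishesAbove
  obtain ⟨b, hb⟩ := B.exists_vanishesAbove
  obtain ⟨c, hc⟩ := C.exists_vanishesAbove
  calc (A * B * C).coeff n
      = ∑ᶠ q, (∑ᶠ k, A.coeff k * delPowMul d k B.coeff q) * delPowMul d q C.coeff n := by
        simp only [coeff_mul]
    _ = ∑ᶠ q, ∑ᶠ k, A.coeff k * (delPowMul d k B.coeff q * delPowMul d q C.coeff n) := by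
        refine finsum_congr fun q => ?_
        rw [finsum_mul' _ _ ((Icc (q - b) a).finite_toSet.subset fun k hk => ?_)]
        · simp only [mul_assoc]
        · have := ha.le_of_ne_zero (left_ne_zero_of_mul hk)
          have := (hb.delPowMul k).le_of_ne_zero (right_ne_zero_of_mul hk)
          rw [mem_coe, mem_Icc]
          omega
    _ = ∑ᶠ k, ∑ᶠ q, A.coeff k * (delPowMul d k B.coeff q * delPowMul d q C.coeff n) := by
        refine finsum_comm_of_mem (Icc (n - c) (a + b)) (Icc (n - c - b) a) fun q k hkq => ?_
        have := ha.le_of_ne_zero (left_ne_zero_of_mul hkq)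
        have h := right_ne_zero_of_mul hkq
        have := (hb.delPowMul k).le_of_ne_zero (left_ne_zero_of_mul h)
        have := (hc.delPowMul q).le_of_ne_zero (right_ne_zero_of_mul h)
        rw [mem_Icc, mem_Icc]
        omega
    _ = ∑ᶠ k, A.coeff k * ∑ᶠ q, delPowMul d k B.coeff q * delPowMul d q C.coeff n := by
        refine finsum_congr fun k => (mul_finsum' _ _ ?_).symm
        refine (Icc (n - c) (b + k)).finite_toSet.subset fun q hq => ?_
        have := (hb.delPowMul k).le_of_ne_zero (left_ne_zero_of_mul hq)
        have := (hc.delPowMul q).le_of_ne_zero (right_ne_zero_of_mul hq)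
        rw [mem_coe, mem_Icc]
        omega
    _ = (A * (B * C)).coeff n := by
        simp only [coeff_mul, delPowMul_mul hd]

protected theorem one_mul (B : PDO R d) : 1 * B = B := by
  refine ext' (funext fun n => ?_)
  rw [coeff_mul, finsum_eq_single _ 0 fun k hk => by rw [coeff_one, if_neg hk, zero_mul],
    delPowMul_zero_left, coeff_one, if_pos rfl, one_mul]

protected theorem mul_one (hd : Leibniz d) (A : PDO R d) : A * 1 = A := by
  refine ext' (funext fun n => ?_)
  rw [coeff_mul, finsum_eq_single _ n fun k hk => by rw [delPowMul_one hd, if_neg hk, mul_zero],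
    delPowMul_one hd, if_pos rfl, mul_one]

protected theorem zero_mul (B : PDO R d) : 0 * B = 0 :=
  ext' (funext fun n =>
    (coeff_mul 0 B n).trans (finsum_eq_zero_of_forall_eq_zero fun _ => zero_mul _))

theorem pos_add_negp (A : PDO R d) : pos A + negp A = A := by
  refine ext' (funext fun n => ?_)
  show (if 0 ≤ n then A.coeff n else 0) + (if n < 0 then A.coeff n else 0) = A.coeff n
  by_cases hn : 0 ≤ n
  · rw [if_pos hn, if_neg (not_lt.2 hn), add_zero]
  · rw [if_neg hn, if_pos (not_le.1 hn), zero_add]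

theorem pos_eq_self_of_negp_eq_zero {A : PDO R d} (h : negp A = 0) : pos A = A := by
  simpa [h] using pos_add_negp A

theorem pos_eq_one_iff {A : PDO R d} :
    pos A = 1 ↔ ∀ n, 0 ≤ n → A.coeff n = if n = 0 then 1 else 0 := by
  constructor
  · intro h n hn
    simpa [pos, hn, coeff_one] using congrArg (coeff · n) h
  · intro h
    refine ext' (funext fun n => ?_)
    show (if 0 ≤ n then A.coeff n else 0) = if n = 0 then 1 else 0
    by_cases hn : 0 ≤ n
    · rw [if_pos hn, h n hn]
    · rw [if_neg hn, if_neg (by omega)]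

theorem VanishesAbove.of_pos_eq_one {A : PDO R d} (h : pos A = 1) : VanishesAbove A.coeff 0 :=
  fun n hn => by rw [pos_eq_one_iff.1 h n hn.le, if_neg hn.ne']

theorem pos_mul_of_pos_eq_one {A B : PDO R d} (hA : pos A = 1) (hB : VanishesAbove B.coeff 0) :
    pos (A * B) = pos B := by
  refine ext' (funext fun n => ?_)
  show (if 0 ≤ n then (A * B).coeff n else 0) = if 0 ≤ n then B.coeff n else 0
  split_ifs with hn
  · rw [coeff_mul, finsum_eq_single _ 0 fun k hk => ?_, delPowMul_zero_left,
      pos_eq_one_iff.1 hA 0 le_rfl, if_pos rfl, one_mul]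
    rcases lt_or_gt_of_ne hk with hk | hk
    · rw [hB.delPowMul k n (by omega), mul_zero]
    · rw [VanishesAbove.of_pos_eq_one hA k hk, zero_mul]
  · rfl

theorem pos_adj_of_pos_eq_one {A : PDO R d} (hA : pos A = 1) : pos (adj A) = 1 := by
  refine pos_eq_one_iff.2 fun n hn => ?_
  show ∑ᶠ k : ℤ, (if _ : 0 ≤ k - n then
      (((-1 : ℚ) ^ k) * gbinom k (k - n).toNat) • d^[(k - n).toNat] (A.coeff k) else 0) = _
  rw [finsum_eq_single _ n fun k hk => ?_]
  · simp only [sub_self, le_refl, ↓reduceDIte, Int.toNat_zero, gbinom_zero_right, mul_one,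
      Function.iterate_zero, id_eq, pos_eq_one_iff.1 hA n hn, smul_ite, smul_zero]
    split_ifs with h0 <;> simp [h0]
  · split_ifs with hkn
    · rw [VanishesAbove.of_pos_eq_one hA k (by omega), iterate_map_zero, smul_zero]
    · rfl

end PDO

namespace EPDO

variable {R : Type} [CommRing R] [Algebra ℚ R] {d : R →+ R}

theorem ext' {A B : EPDO R d} (h₁ : A.re = B.re) (h₂ : A.im = B.im) : A = B := by
  cases A; cases B; cases h₁; cases h₂; rfl

theorem eps_mul_lift (X : PDO R d) : eps * lift X = ⟨0, X⟩ :=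
  ext' (PDO.zero_mul X) (show 0 * 0 + 1 * X = X by rw [PDO.zero_mul, PDO.one_mul, zero_add])

theorem lift_add_eps_mul_lift (P Q : PDO R d) : lift P + eps * lift Q = ⟨P, Q⟩ := by
  rw [eps_mul_lift]
  exact ext' (add_zero P) (zero_add Q)

end EPDO

theorem first_order_adjoint_formula_general
    (R : Type) [CommRing R] [Algebra ℚ R] (d : R →+ R)
    (hd : Leibniz d)
    (P Q Pinv : PDO R d) (hP : PDO.pos P = 1)
    (hPinv : P * Pinv = 1 ∧ Pinv * P = 1)
    (hbil : EPDO.enegp ((EPDO.lift P + EPDO.eps * EPDO.lift Q)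
        * EPDO.eadj (EPDO.lift P + EPDO.eps * EPDO.lift Q)) = 0) :
    EPDO.eadj (EPDO.lift P + EPDO.eps * EPDO.lift Q)
      = EPDO.lift Pinv * (1 - EPDO.eps * EPDO.lift (Q * Pinv)
          + EPDO.eps * EPDO.lift (PDO.pos (Q * Pinv + P * PDO.adj Q))) := by
  rw [EPDO.lift_add_eps_mul_lift] at hbil ⊢
  have hPadjP : P * P.adj = 1 := by
    have hneg : (P * P.adj).negp = 0 := congrArg EPDO.re hbil
    have hadj := PDO.pos_adj_of_pos_eq_one hP
    rw [← PDO.pos_add_negp (P * P.adj), hneg, add_zero,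
      PDO.pos_mul_of_pos_eq_one hP (.of_pos_eq_one hadj), hadj]
  have hadj : P.adj = Pinv := by
    rw [← PDO.one_mul P.adj, ← hPinv.2, PDO.mul_assoc hd, hPadjP, PDO.mul_one hd]
  have hdiff : (Q * Pinv + P * Q.adj).pos = Q * Pinv + P * Q.adj :=
    PDO.pos_eq_self_of_negp_eq_zero (by rw [add_comm, ← hadj]; exact congrArg EPDO.im hbil)
  rw [EPDO.eps_mul_lift, EPDO.eps_mul_lift, hdiff]
  refine EPDO.ext' ?_ ?_
  · show P.adj = Pinv * (1 - 0 + 0)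
    rw [sub_zero, add_zero, PDO.mul_one hd, hadj]
  · show Q.adj = Pinv * (0 - Q * Pinv + (Q * Pinv + P * Q.adj)) + 0 * (1 - 0 + 0)
    rw [PDO.zero_mul, add_zero, zero_sub, neg_add_cancel_left, ← PDO.mul_assoc hd, hPinv.2,
      PDO.one_mul]

/-- First order expansion of the adjoint: if `((P+εQ)(P+εQ)*)₋ = 0` with `P₊ = 1`, then
`P* + εQ* = P⁻¹(1 − εQP⁻¹ + ε(QP⁻¹ + PQ*)₊)`. -/
theorem first_order_adjoint_formula
    (R : Type) [CommRing R] [Algebra ℚ R] (d : R →+ R)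
    (hd : Leibniz d) (h : Rˣ) (hdh : d (h : R) = 0)
    (P Q Pinv : PDO R d) (hP : PDO.pos P = 1)
    (hPinv : P * Pinv = 1 ∧ Pinv * P = 1)
    (hbil : EPDO.enegp ((EPDO.lift P + EPDO.eps * EPDO.lift Q)
        * EPDO.eadj (EPDO.lift P + EPDO.eps * EPDO.lift Q)) = 0) :
    EPDO.eadj (EPDO.lift P + EPDO.eps * EPDO.lift Q)
      = EPDO.lift Pinv * (1 - EPDO.eps * EPDO.lift (Q * Pinv)
          + EPDO.eps * EPDO.lift (PDO.pos (Q * Pinv + P * PDO.adj Q))) :=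
  first_order_adjoint_formula_general R d hd P Q Pinv hP hPinv hbil
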